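/- arXiv:1106.5448 — 2 statements merged into one kernel-verified Lean document; each statement's English description precedes it below -/
import Mathlib

section
/- Suppose |C| ≥ 2, the number n of non-manipulators is even, and a, b are distinct alternatives. Let P consist of n/2 copies of the vote V₁ = [a ≻ b ≻ rest] and n/2 copies of V₂ = [b ≻ a ≻ reverse of rest], where 'rest' is any fixed linear order on C \ {a,b}. Then for any vote W of the manipulator ranking a above b, a is the Condorcet winner of P ∪ {W}, and for any vote W' ranking b above a, b is the Condorcet winner of P ∪ {W'}. -/
/-- The reverse (dual) of a linear order. -/
def revOrder {C : Type*} (W : LinearOrder C) : LinearOrder C :=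
  @OrderDual.instLinearOrder C W

/-- Number of votes in profile `P` ranking `a` strictly above `b`. -/
def rankedAbove {C : Type*} (P : List (LinearOrder C)) (a b : C) : Nat :=
  P.countP (fun V => @decide (V.lt b a) (V.toDecidableLT b a))

/-- `D P a b`: number of votes ranking `a` above `b` minus number ranking `b` above `a`. -/
def D {C : Type*} (P : List (LinearOrder C)) (a b : C) : ℤ :=
  (rankedAbove P a b : ℤ) - (rankedAbove P b a : ℤ)

/-- `c` is a Condorcet winner of `P`: it beats every other alternative in pairwise majority. -/
def CondorcetWinner {C : Type*} (P : List (LinearOrder C)) (c : C) : Prop :=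
  ∀ y, y ≠ c → 0 < D P c y

/-!
Write the margin of the profile as `D [W] + k * D [V₁] + k * D [V₂]`, a sum of single-vote
margins, each lying in `[-1, 1]`. Against any `y ∉ {a, b}` both `V₁` and `V₂` put `a` above `y`,
so the margin is at least `2k - 1 > 0`; against `b` the votes `V₁` and `V₂` cancel at worst and
the manipulator `W` breaks the tie. The case of `b` is the same with `V₁` and `V₂` exchanged.
-/

section Margin

variable {C : Type*}

lemma D_nil (x y : C) : D [] x y = 0 := by
  simp [D, rankedAbove]

lemma D_cons (V : LinearOrder C) (P : List (LinearOrder C)) (x y : C) :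
    D (V :: P) x y = D [V] x y + D P x y := by
  simp only [D, rankedAbove, List.countP_cons, List.countP_nil]
  push_cast
  ring

lemma D_append (P Q : List (LinearOrder C)) (x y : C) :
    D (P ++ Q) x y = D P x y + D Q x y := by
  simp only [D, rankedAbove, List.countP_append]
  push_cast
  ring

lemma D_replicate (k : ℕ) (V : LinearOrder C) (x y : C) :
    D (List.replicate k V) x y = k * D [V] x y := by
  induction k with
  | zero => simp [D_nil]
  | succ k ih => rw [List.replicate_succ, D_cons, ih]; push_cast; ring

lemma D_perm {P Q : List (LinearOrder C)} (h : P.Perm Q) (x y : C) : D P x y = D Q x y := by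
  simp only [D, rankedAbove, h.countP_eq]

lemma D_singleton_of_lt {V : LinearOrder C} {x y : C} (h : V.lt y x) : D [V] x y = 1 := by
  let _ := V
  simp [D, rankedAbove, h, h.not_gt]

lemma neg_one_le_D_singleton (V : LinearOrder C) (x y : C) : -1 ≤ D [V] x y := by
  simp only [D, rankedAbove, List.countP_cons, List.countP_nil]
  split_ifs <;> simp

lemma CondorcetWinner.of_perm {P Q : List (LinearOrder C)} {c : C} (h : P.Perm Q)
    (hP : CondorcetWinner P c) : CondorcetWinner Q c := fun y hy => D_perm h c y ▸ hP y hy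

end Margin

theorem condorcetWinner_cons_replicate_append {C : Type*} {a b : C} {V1 V2 W : LinearOrder C}
    {k : ℕ} (hk : 0 < k) (h1 : ∀ x, x ≠ a → V1.lt x a)
    (h2 : ∀ x, x ≠ a → x ≠ b → V2.lt x a) (hW : W.lt b a) :
    CondorcetWinner (W :: (List.replicate k V1 ++ List.replicate k V2)) a := by
  intro y hy
  have margin : D (W :: (List.replicate k V1 ++ List.replicate k V2)) a y =
      D [W] a y + k * D [V1] a y + k * D [V2] a y := by
    rw [D_cons, D_append, D_replicate, D_replicate, add_assoc]
  have hV2 := neg_one_le_D_singleton V2 a y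
  rw [margin, D_singleton_of_lt (h1 y hy)]
  by_cases hyb : y = b
  · subst hyb
    rw [D_singleton_of_lt hW]
    nlinarith
  · rw [D_singleton_of_lt (h2 y hy hyb)]
    have hW' := neg_one_le_D_singleton W a y
    have hk' : (1 : ℤ) ≤ k := by exact_mod_cast hk
    linarith

theorem condorcet_pair_construction_general {C : Type*} (a b : C)
    (V1 V2 : LinearOrder C)
    -- `a` is ranked first in `V₁`
    (h1a : ∀ x, x ≠ a → V1.lt x a)
    -- `b` is ranked second in `V₁`
    (h1b : ∀ x, x ≠ a → x ≠ b → V1.lt x b)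
    -- `b` is ranked first in `V₂`
    (h2b : ∀ x, x ≠ b → V2.lt x b)
    -- `a` is ranked second in `V₂`
    (h2a : ∀ x, x ≠ a → x ≠ b → V2.lt x a)
    (k : Nat) (hk : 0 < k) :
    (∀ W : LinearOrder C, W.lt b a →
      CondorcetWinner (W :: (List.replicate k V1 ++ List.replicate k V2)) a) ∧
    (∀ W' : LinearOrder C, W'.lt a b →
      CondorcetWinner (W' :: (List.replicate k V1 ++ List.replicate k V2)) b) :=
  ⟨fun _ hW => condorcetWinner_cons_replicate_append hk h1a h2a hW,
    fun _ hW' => (condorcetWinner_cons_replicate_append hk h2b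
      (fun x hxb hxa => h1b x hxa hxb) hW').of_perm (List.perm_append_comm.cons _)⟩

/-- Let `P` consist of `k ≥ 1` copies of `V₁ = [a ≻ b ≻ σ]` and `k` copies of
`V₂ = [b ≻ a ≻ reverse of σ]` (so the number of non-manipulators `n = 2k` is even).
Then any manipulator vote ranking `a` above `b` makes `a` the Condorcet winner, and any
vote ranking `b` above `a` makes `b` the Condorcet winner. -/
theorem condorcet_pair_construction {C : Type*} (a b : C) (hab : a ≠ b)
    (V1 V2 : LinearOrder C)
    -- `a` is ranked first in `V₁`
    (h1a : ∀ x, x ≠ a → V1.lt x a)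
    -- `b` is ranked second in `V₁`
    (h1b : ∀ x, x ≠ a → x ≠ b → V1.lt x b)
    -- `b` is ranked first in `V₂`
    (h2b : ∀ x, x ≠ b → V2.lt x b)
    -- `a` is ranked second in `V₂`
    (h2a : ∀ x, x ≠ a → x ≠ b → V2.lt x a)
    -- on the remaining alternatives, `V₂` is the reverse of `V₁`
    (hrev : ∀ x y, x ≠ a → x ≠ b → y ≠ a → y ≠ b → (V1.lt x y ↔ V2.lt y x))
    (k : Nat) (hk : 0 < k) :
    (∀ W : LinearOrder C, W.lt b a →
      CondorcetWinner (W :: (List.replicate k V1 ++ List.replicate k V2)) a) ∧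
    (∀ W' : LinearOrder C, W'.lt a b →
      CondorcetWinner (W' :: (List.replicate k V1 ++ List.replicate k V2)) b) :=
  condorcet_pair_construction_general a b V1 V2 h1a h1b h2b h2a k hk
end

section
/- Let V and U be distinct linear orders on C and let s be a strictly decreasing scoring vector. Then there exist alternatives c and c' such that s(V,c) > s(V,c') and s(U,c') ≥ s(V,c) > s(U,c), where s(W,x) denotes the score of x in vote W. In particular, c is ranked strictly higher than c' in V, and c' is ranked strictly higher than c in U. -/
/-! Let `i` be the first position at which the rankings `V` and `U` put different alternatives,
`c` in `V` and `c'` in `U`. Above `i` the two rankings agree, so `c'` sits below `i` in `V`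
and `c` sits below `i` in `U`; as the scoring vector is strictly decreasing this gives all the
score inequalities, with `s(U,c') = s(V,c)`. -/

namespace Equiv

variable {α β : Type*} [LinearOrder β] {V U : α ≃ β}

theorem exists_eqOn_Iio_symm_ne [WellFoundedLT β] (h : V ≠ U) :
    ∃ i, Set.EqOn V.symm U.symm (Set.Iio i) ∧ V.symm i ≠ U.symm i := by
  have hne : ∃ i, V.symm i ≠ U.symm i := by
    by_contra! hall
    exact h (symm_bijective.injective (Equiv.ext hall))
  obtain ⟨i, hi, hmin⟩ := wellFounded_lt.has_min {i | V.symm i ≠ U.symm i} hne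
  exact ⟨i, fun j hj => not_not.mp fun hne => hmin j hne hj, hi⟩

theorem lt_apply_symm_of_eqOn_Iio {i : β} (hagree : Set.EqOn V.symm U.symm (Set.Iio i))
    (hi : V.symm i ≠ U.symm i) : i < V (U.symm i) := by
  rcases lt_or_ge (V (U.symm i)) i with hlt | hge
  · have : U.symm i = U.symm (V (U.symm i)) := by
      rw [← hagree (Set.mem_Iio.mpr hlt), symm_apply_apply]
    exact absurd (U.symm.injective this) hlt.ne'
  · exact lt_of_le_of_ne hge fun heq => hi (V.symm_apply_eq.mpr heq)

end Equiv

theorem exists_score_witness_general {C : Type*} (m : Nat)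
    (s : Fin m → ℤ) (hs : StrictAnti s)
    (V U : C ≃ Fin m) (hVU : V ≠ U) :
    ∃ c c' : C, s (V c) > s (V c') ∧ s (U c') ≥ s (V c) ∧ s (V c) > s (U c) ∧
      V c < V c' ∧ U c' < U c := by
  obtain ⟨i, hagree, hi⟩ := Equiv.exists_eqOn_Iio_symm_ne hVU
  have hVc' : i < V (U.symm i) := Equiv.lt_apply_symm_of_eqOn_Iio hagree hi
  have hUc : i < U (V.symm i) :=
    Equiv.lt_apply_symm_of_eqOn_Iio hagree.symm hi.symm
  refine ⟨V.symm i, U.symm i, ?_, ?_, ?_, ?_, ?_⟩ <;>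
    simp only [Equiv.apply_symm_apply, gt_iff_lt, ge_iff_le, le_refl]
  exacts [hs hVc', hs hUc, hVc', hUc]

/-- Votes are represented by ranking functions `V : C ≃ Fin m` (`V x` is the 0-indexed
position of `x`, position `0` being the top); `s : Fin m → ℤ` is a strictly decreasing
scoring vector, and the score of `x` in vote `W` is `s (W x)`. If `V ≠ U`, there exist
alternatives `c`, `c'` with `s(V,c) > s(V,c')` and `s(U,c') ≥ s(V,c) > s(U,c)`;
in particular `c` is ranked strictly above `c'` in `V` and `c'` strictly above `c` in `U`. -/
theorem exists_score_witness {C : Type*} [Fintype C] (m : Nat)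
    (hm : Fintype.card C = m) (s : Fin m → ℤ) (hs : StrictAnti s)
    (V U : C ≃ Fin m) (hVU : V ≠ U) :
    ∃ c c' : C, s (V c) > s (V c') ∧ s (U c') ≥ s (V c) ∧ s (V c) > s (U c) ∧
      V c < V c' ∧ U c' < U c :=
  exists_score_witness_general m s hs V U hVU
end
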